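/- Under the nondegeneracy and boundedness assumptions, for every Θ ∈ ℝ^{n×d}, the suboptimality loss satisfies l_sub(Θ) ≤ E[ l(D; Θ) ], where l_sub(Θ) = E[ ĉ^T x* − ĉ^T x̂ ] with ĉ = Θ z, x* the optimal solution of LP(c, A, b), x̂ an optimal solution of LP(ĉ, A, b), and the expectations are over D = (c, A, b, z) ~ P. -/

import Mathlib

open MeasureTheory Matrix Finset

namespace MOMPaper

variable {n m d : ℕ}

/-- A point is feasible for the standard-form LP min cᵀx s.t. Ax = b, x ≥ 0. -/
def Feasible (A : Matrix (Fin m) (Fin n) ℝ) (b : Fin m → ℝ) (x : Fin n → ℝ) : Prop :=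
  A.mulVec x = b ∧ ∀ i, 0 ≤ x i

/-- x is an optimal solution of LP(c,A,b). -/
def IsOptimal (c : Fin n → ℝ) (A : Matrix (Fin m) (Fin n) ℝ) (b : Fin m → ℝ)
    (x : Fin n → ℝ) : Prop :=
  Feasible A b x ∧ ∀ y, Feasible A b y → c ⬝ᵥ x ≤ c ⬝ᵥ y

/-- Column submatrix A_B, where the basis B is given by an enumeration β : Fin m → Fin n. -/
def subCols (A : Matrix (Fin m) (Fin n) ℝ) (β : Fin m → Fin n) : Matrix (Fin m) (Fin m) ℝ :=
  A.submatrix id β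

/-- Reduced cost vector r = c − Aᵀ (A_B⁻¹)ᵀ c_B. -/
noncomputable def reducedCost (c : Fin n → ℝ) (A : Matrix (Fin m) (Fin n) ℝ)
    (β : Fin m → Fin n) : Fin n → ℝ :=
  c - (Aᵀ).mulVec ((((subCols A β)⁻¹)ᵀ).mulVec (c ∘ β))

/-- Euclidean norm of a vector. -/
noncomputable def l2norm {ι : Type*} [Fintype ι] (x : ι → ℝ) : ℝ :=
  Real.sqrt (∑ i, x i ^ 2)

/-- Frobenius norm of a matrix. -/
noncomputable def frob {ι κ : Type*} [Fintype ι] [Fintype κ] (M : Matrix ι κ ℝ) : ℝ :=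
  Real.sqrt (∑ i, ∑ j, M i j ^ 2)

/-- Largest singular value of a square matrix, i.e. its ℓ²-operator norm. -/
noncomputable def sigmaMax {ι : Type*} [Fintype ι] [DecidableEq ι]
    (M : Matrix ι ι ℝ) : ℝ :=
  ‖Matrix.toEuclideanCLM (𝕜 := ℝ) M‖

/-- A data sample D = (c, A, b, z). -/
abbrev Samp (n m d : ℕ) : Type :=
  (Fin n → ℝ) × (Fin m → Fin n → ℝ) × (Fin m → ℝ) × (Fin d → ℝ)

def cOf (D : Samp n m d) : Fin n → ℝ := D.1
def AOf (D : Samp n m d) : Matrix (Fin m) (Fin n) ℝ := Matrix.of D.2.1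
def bOf (D : Samp n m d) : Fin m → ℝ := D.2.2.1
def zOf (D : Samp n m d) : Fin d → ℝ := D.2.2.2

/-- Indices of positive coordinates: the optimal basis B* of x*. -/
noncomputable def posSupport (x : Fin n → ℝ) : Finset (Fin n) :=
  Finset.univ.filter (fun i => 0 < x i)

/-- Canonical (increasing) enumeration of a finset of cardinality m. -/
noncomputable def enumOf [NeZero n] (B : Finset (Fin n)) : Fin m → Fin n :=
  if h : B.card = m then B.orderEmbOfFin h else
    fun _ => ⟨0, Nat.pos_of_ne_zero (NeZero.ne n)⟩

/-- Nondegeneracy of the sample D, whose unique optimal solution is xs. -/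
def Nondeg (D : Samp n m d) (xs : Fin n → ℝ) : Prop :=
  IsOptimal (cOf D) (AOf D) (bOf D) xs ∧
  (∀ y, IsOptimal (cOf D) (AOf D) (bOf D) y → y = xs) ∧
  (∀ γ : Fin m → Fin n, Function.Injective γ → IsUnit (subCols (AOf D) γ).det) ∧
  (posSupport xs).card = m

/-- Boundedness of the sample D (with optimal solution xs), with constant σ̄. -/
noncomputable def BoundedD [NeZero n] (σb : ℝ) (D : Samp n m d) (xs : Fin n → ℝ) : Prop :=
  sigmaMax ((subCols (AOf D) (enumOf (posSupport xs)))⁻¹) ≤ σb ∧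
  l2norm (zOf D) ≤ 1 ∧
  (∀ i j, |AOf D i j| ≤ 1) ∧ (∀ i, |bOf D i| ≤ 1) ∧ (∀ i, |cOf D i| ≤ 1) ∧
  (∀ x, Feasible (AOf D) (bOf D) x → l2norm x ≤ 1)

/-- Margin-violation loss l(D;Θ) = Σ_{i ∈ N*} max(1 − r̂_i, 0), where r̂ is the
    reduced cost of ĉ = Θz at the optimal basis B* of xs. -/
noncomputable def mloss [NeZero n] (Θ : Matrix (Fin n) (Fin d) ℝ) (D : Samp n m d)
    (xs : Fin n → ℝ) : ℝ :=
  ∑ i ∈ Finset.univ \ posSupport xs,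
    max (1 - reducedCost (Θ.mulVec (zOf D)) (AOf D) (enumOf (posSupport xs)) i) 0

/-- The MOM objective (λ/2)‖Θ‖_F² + (1/T) Σ_t l(D_t;Θ). -/
noncomputable def momObj [NeZero n] (lam : ℝ) (T : ℕ) (Ds : Fin T → Samp n m d)
    (xstar : Samp n m d → Fin n → ℝ) (Θ : Matrix (Fin n) (Fin d) ℝ) : ℝ :=
  lam / 2 * (frob Θ) ^ 2 + (1 / (T : ℝ)) * ∑ t, mloss Θ (Ds t) (xstar (Ds t))

/-- The event (on a new sample D) that xs(D) is the unique optimal solution of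
    LP(ĉ, A, b) with predicted objective ĉ = Θ z, i.e. "x*_new = x̂_new". -/
def PredictsOpt (Θ : Matrix (Fin n) (Fin d) ℝ) (D : Samp n m d) (xs : Fin n → ℝ) : Prop :=
  IsOptimal (Θ.mulVec (zOf D)) (AOf D) (bOf D) xs ∧
  ∀ y, IsOptimal (Θ.mulVec (zOf D)) (AOf D) (bOf D) y → y = xs

/-!
At the true optimal basis `B*` the reduced cost `r̂` of `ĉ` vanishes on `B*` while `x*` vanishes
off `B*`, so for every feasible `x̂` the gap is `ĉᵀx* − ĉᵀx̂ = −Σ_{i ∉ B*} r̂ᵢ x̂ᵢ`; as `0 ≤ x̂ᵢ ≤ 1`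
each term is at most `max(1 − r̂ᵢ, 0)`. Integrating this pointwise bound needs the margin loss to be
integrable. It is bounded through `σ̄`, and although `x*` is an arbitrary function of the sample,
almost surely `B*` is the unique `m`-element basis whose basic solution is feasible and cheapest
among all feasible basic solutions, a measurable condition on the data.
-/

open Function

lemma mem_posSupport {x : Fin n → ℝ} {i : Fin n} : i ∈ posSupport x ↔ 0 < x i := by
  simp [posSupport]

lemma eq_zero_of_notMem_posSupport {x : Fin n → ℝ} (hx : ∀ i, 0 ≤ x i) {i : Fin n}
    (hi : i ∉ posSupport x) : x i = 0 :=
  (hx i).antisymm' (not_lt.1 (mt mem_posSupport.2 hi))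

lemma abs_le_l2norm {ι : Type*} [Fintype ι] (x : ι → ℝ) (i : ι) : |x i| ≤ l2norm x := by
  rw [l2norm, ← Real.sqrt_sq_eq_abs]
  exact Real.sqrt_le_sqrt (Finset.single_le_sum (f := fun j => x j ^ 2)
    (fun j _ => sq_nonneg _) (Finset.mem_univ i))

section enumOf

variable [NeZero n] {B : Finset (Fin n)}

lemma enumOf_injective (hB : B.card = m) : Injective (enumOf (m := m) B) := by
  rw [enumOf, dif_pos hB]
  exact (B.orderEmbOfFin hB).injective

lemma range_enumOf (hB : B.card = m) : Set.range (enumOf (m := m) B) = B := by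
  rw [enumOf, dif_pos hB]
  exact B.range_orderEmbOfFin hB

end enumOf

lemma abs_mulVec_apply_le {ι κ : Type*} [Fintype κ] {M : Matrix ι κ ℝ} {v : κ → ℝ} {a b : ℝ}
    (hM : ∀ i j, |M i j| ≤ a) (hv : ∀ j, |v j| ≤ b) (i : ι) :
    |(M *ᵥ v) i| ≤ Fintype.card κ * (a * b) := by
  calc |(M *ᵥ v) i| ≤ ∑ j, |M i j * v j| := Finset.abs_sum_le_sum_abs _ _
    _ ≤ ∑ _j : κ, a * b := Finset.sum_le_sum fun j _ => by
        rw [abs_mul]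
        exact mul_le_mul (hM i j) (hv j) (abs_nonneg _) ((abs_nonneg _).trans (hM i j))
    _ = Fintype.card κ * (a * b) := by simp

lemma abs_apply_le_sigmaMax {ι : Type*} [Fintype ι] [DecidableEq ι] (M : Matrix ι ι ℝ)
    (i j : ι) : |M i j| ≤ sigmaMax M := by
  let e : EuclideanSpace ℝ ι := WithLp.toLp 2 (Pi.single j 1)
  calc |M i j| = ‖toEuclideanCLM (𝕜 := ℝ) M e i‖ := by simp [e, mulVec_single]
    _ ≤ ‖toEuclideanCLM (𝕜 := ℝ) M e‖ := PiLp.norm_apply_le _ _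
    _ ≤ sigmaMax M * ‖e‖ := (toEuclideanCLM (𝕜 := ℝ) M).le_opNorm e
    _ = sigmaMax M := by simp [e]

section ReducedCost

variable {A : Matrix (Fin m) (Fin n) ℝ} {β : Fin m → Fin n}

lemma reducedCost_dotProduct (c : Fin n → ℝ) {b : Fin m → ℝ} {x : Fin n → ℝ}
    (hx : A *ᵥ x = b) :
    reducedCost c A β ⬝ᵥ x = c ⬝ᵥ x - ((subCols A β)⁻¹ᵀ *ᵥ (c ∘ β)) ⬝ᵥ b := by
  rw [reducedCost, sub_dotProduct, mulVec_transpose, ← dotProduct_mulVec, hx]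

lemma reducedCost_apply_self (hdet : IsUnit (subCols A β).det) (c : Fin n → ℝ) (j : Fin m) :
    reducedCost c A β (β j) = 0 := by
  have h : (Aᵀ *ᵥ ((subCols A β)⁻¹ᵀ *ᵥ (c ∘ β))) (β j) = c (β j) := by
    change ((subCols A β)ᵀ *ᵥ ((subCols A β)⁻¹ᵀ *ᵥ (c ∘ β))) j = _
    rw [mulVec_mulVec, ← transpose_mul, nonsing_inv_mul _ hdet, transpose_one, one_mulVec]
    rfl
  rw [reducedCost, Pi.sub_apply, h, sub_self]

lemma abs_reducedCost_le {c : Fin n → ℝ} {γ σ : ℝ} (hc : ∀ i, |c i| ≤ γ)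
    (hA : ∀ i j, |A i j| ≤ 1) (hinv : ∀ i j, |(subCols A β)⁻¹ i j| ≤ σ) (i : Fin n) :
    |reducedCost c A β i| ≤ (1 + m ^ 2 * σ) * γ := by
  have hy := abs_mulVec_apply_le (M := (subCols A β)⁻¹ᵀ) (fun i j => hinv j i)
    (fun j => hc (β j))
  have hAy := abs_mulVec_apply_le (M := Aᵀ) (fun i j => hA j i) hy i
  simp only [Fintype.card_fin] at hAy
  calc |reducedCost c A β i| ≤ |c i| + |(Aᵀ *ᵥ ((subCols A β)⁻¹ᵀ *ᵥ (c ∘ β))) i| := abs_sub _ _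
    _ ≤ γ + m * (1 * (m * (σ * γ))) := add_le_add (hc i) hAy
    _ = (1 + m ^ 2 * σ) * γ := by ring

end ReducedCost

lemma neg_mul_le_max_one_sub {r x : ℝ} (hx₀ : 0 ≤ x) (hx₁ : x ≤ 1) :
    -(r * x) ≤ max (1 - r) 0 := by
  rcases le_or_gt 0 r with hr | hr
  · exact (neg_nonpos.2 (mul_nonneg hr hx₀)).trans (le_max_right _ _)
  · exact le_max_of_le_left (by nlinarith)

noncomputable def marginViolation [NeZero n] (c : Fin n → ℝ) (A : Matrix (Fin m) (Fin n) ℝ)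
    (B : Finset (Fin n)) : ℝ :=
  ∑ i ∈ Finset.univ \ B, max (1 - reducedCost c A (enumOf B) i) 0

section MarginViolation

variable [NeZero n] {c : Fin n → ℝ} {A : Matrix (Fin m) (Fin n) ℝ} {B : Finset (Fin n)}

lemma marginViolation_nonneg : 0 ≤ marginViolation c A B :=
  Finset.sum_nonneg fun _ _ => le_max_right _ _

lemma marginViolation_le {ρ : ℝ} (hr : ∀ i, |reducedCost c A (enumOf B) i| ≤ ρ) :
    marginViolation c A B ≤ n * (1 + ρ) := by
  have hterm : ∀ i, max (1 - reducedCost c A (enumOf B) i) 0 ≤ 1 + ρ := fun i =>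
    max_le (by linarith [neg_abs_le (reducedCost c A (enumOf B) i), hr i])
      (by linarith [abs_nonneg (reducedCost c A (enumOf B) i), hr i])
  calc marginViolation c A B ≤ ∑ i, max (1 - reducedCost c A (enumOf B) i) 0 :=
        Finset.sum_le_sum_of_subset_of_nonneg (Finset.subset_univ _)
          fun _ _ _ => le_max_right _ _
    _ ≤ ∑ _i : Fin n, (1 + ρ) := Finset.sum_le_sum fun i _ => hterm i
    _ = n * (1 + ρ) := by simp [mul_add]

lemma dotProduct_sub_dotProduct_le_marginViolation (hB : B.card = m)
    (hdet : IsUnit (subCols A (enumOf B)).det) {b : Fin m → ℝ} {x y : Fin n → ℝ}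
    (hx : A *ᵥ x = b) (hxB : ∀ i ∉ B, x i = 0) (hy : Feasible A b y) (hy₁ : ∀ i, y i ≤ 1) :
    c ⬝ᵥ x - c ⬝ᵥ y ≤ marginViolation c A B := by
  set r := reducedCost c A (enumOf (m := m) B)
  have hrB : ∀ i ∈ B, r i = 0 := fun i hi => by
    obtain ⟨j, rfl⟩ : i ∈ Set.range (enumOf (m := m) B) := (range_enumOf hB).symm ▸ hi
    exact reducedCost_apply_self hdet c j
  have hrx : r ⬝ᵥ x = 0 := Finset.sum_eq_zero fun i _ => by
    by_cases hi : i ∈ B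
    · rw [hrB i hi, zero_mul]
    · rw [hxB i hi, mul_zero]
  have hry : ∑ i ∈ Finset.univ \ B, r i * y i = r ⬝ᵥ y :=
    Finset.sum_subset (Finset.subset_univ _) fun i _ hi => by
      rw [hrB i (by simpa using hi), zero_mul]
  calc c ⬝ᵥ x - c ⬝ᵥ y = r ⬝ᵥ x - r ⬝ᵥ y := by
        rw [reducedCost_dotProduct c hx, reducedCost_dotProduct c hy.1]; ring
    _ = ∑ i ∈ Finset.univ \ B, -(r i * y i) := by
        rw [hrx, Finset.sum_neg_distrib, hry, zero_sub]
    _ ≤ marginViolation c A B := Finset.sum_le_sum fun i _ =>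
        neg_mul_le_max_one_sub (hy.2 i) (hy₁ i)

end MarginViolation

noncomputable def basicSol [NeZero n] (A : Matrix (Fin m) (Fin n) ℝ) (b : Fin m → ℝ)
    (B : Finset (Fin n)) : Fin n → ℝ :=
  extend (enumOf B) ((subCols A (enumOf B))⁻¹ *ᵥ b) 0

lemma mulVec_eq_subCols_mulVec_comp {A : Matrix (Fin m) (Fin n) ℝ} {β : Fin m → Fin n}
    (hβ : Injective β) {x : Fin n → ℝ} (hx : ∀ i ∉ Set.range β, x i = 0) :
    A *ᵥ x = subCols A β *ᵥ (x ∘ β) := by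
  funext r
  exact (Fintype.sum_of_injective β hβ _ _ (fun i hi => by simp [hx i hi]) fun _ => rfl).symm

section BasicSol

variable [NeZero n] {A : Matrix (Fin m) (Fin n) ℝ} {b : Fin m → ℝ} {B : Finset (Fin n)}

lemma basicSol_eq_zero_of_notMem (hB : B.card = m) {i : Fin n} (hi : i ∉ B) :
    basicSol A b B i = 0 := by
  have hi' : i ∉ Set.range (enumOf (m := m) B) := by rwa [range_enumOf hB]
  exact extend_apply' _ _ _ hi'

lemma basicSol_eq_of_mulVec_eq (hB : B.card = m) (hdet : IsUnit (subCols A (enumOf B)).det)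
    {x : Fin n → ℝ} (hx : A *ᵥ x = b) (hxB : ∀ i ∉ B, x i = 0) : basicSol A b B = x := by
  have hinj := enumOf_injective (m := m) hB
  have hxβ : (subCols A (enumOf B))⁻¹ *ᵥ b = x ∘ enumOf B := by
    rw [← hx, mulVec_eq_subCols_mulVec_comp hinj (by rwa [range_enumOf hB]), mulVec_mulVec,
      nonsing_inv_mul _ hdet, one_mulVec]
  funext i
  by_cases hi : i ∈ B
  · obtain ⟨j, rfl⟩ : i ∈ Set.range (enumOf (m := m) B) := (range_enumOf hB).symm ▸ hi
    rw [basicSol, hinj.extend_apply, hxβ, Function.comp_apply]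
  · rw [basicSol_eq_zero_of_notMem hB hi, hxB i hi]

end BasicSol

def IsOptimalAmongBasic [NeZero n] (c : Fin n → ℝ) (A : Matrix (Fin m) (Fin n) ℝ)
    (b : Fin m → ℝ) (B : Finset (Fin n)) : Prop :=
  Feasible A b (basicSol A b B) ∧
    ∀ B', Feasible A b (basicSol A b B') → c ⬝ᵥ basicSol A b B ≤ c ⬝ᵥ basicSol A b B'

lemma aemeasurable_apply_of_ae_mem_iff {α ι β : Type*} [MeasurableSpace α] [Fintype ι]
    [AddCommMonoid β] [MeasurableSpace β] [MeasurableAdd₂ β] {μ : Measure α}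
    {F : ι → α → β} {s : ι → Set α} {k : α → ι} (hF : ∀ i, Measurable (F i))
    (hs : ∀ i, MeasurableSet (s i)) (hk : ∀ᵐ a ∂μ, ∀ i, a ∈ s i ↔ k a = i) :
    AEMeasurable (fun a => F (k a) a) μ := by
  refine ⟨fun a => ∑ i, (s i).indicator (F i) a,
    Finset.measurable_sum _ fun i _ => (hF i).indicator (hs i), ?_⟩
  filter_upwards [hk] with a ha
  rw [Finset.sum_eq_single (k a)
      (fun i _ hi => Set.indicator_of_notMem (fun h => hi ((ha i).1 h).symm) _) (by simp),
    Set.indicator_of_mem ((ha _).2 rfl)]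

section Measurability

@[fun_prop]
lemma measurable_cOf_apply (i : Fin n) : Measurable fun D : Samp n m d => cOf D i := by
  unfold cOf
  fun_prop

@[fun_prop]
lemma measurable_bOf_apply (i : Fin m) : Measurable fun D : Samp n m d => bOf D i := by
  unfold bOf
  fun_prop

@[fun_prop]
lemma measurable_AOf_apply (i : Fin m) (j : Fin n) :
    Measurable fun D : Samp n m d => AOf D i j := by
  unfold AOf
  fun_prop

@[fun_prop]
lemma measurable_subCols_inv_apply (β : Fin m → Fin n) (i j : Fin m) :
    Measurable fun D : Samp n m d => (subCols (AOf D) β)⁻¹ i j := by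
  have h : Continuous fun D : Samp n m d => subCols (AOf D) β := by
    unfold subCols AOf
    fun_prop
  simp only [Matrix.inv_def, Matrix.smul_apply, Ring.inverse_eq_inv', smul_eq_mul]
  exact h.matrix_det.measurable.inv.mul (h.matrix_adjugate.matrix_elem i j).measurable

lemma measurable_reducedCost_apply {c : Samp n m d → Fin n → ℝ} (hc : Measurable c)
    (β : Fin m → Fin n) (i : Fin n) :
    Measurable fun D => reducedCost (c D) (AOf D) β i := by
  simp only [reducedCost, Pi.sub_apply, mulVec, dotProduct, transpose_apply, Function.comp_apply]
  fun_prop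

variable [NeZero n]

@[fun_prop]
lemma measurable_basicSol_apply (B : Finset (Fin n)) (i : Fin n) :
    Measurable fun D : Samp n m d => basicSol (AOf D) (bOf D) B i := by
  classical
  by_cases h : ∃ j, enumOf (m := m) B j = i
  · simp only [basicSol, extend_def, dif_pos h, mulVec, dotProduct]
    fun_prop
  · simp only [basicSol, extend_apply' _ _ _ h]
    exact measurable_const

lemma measurable_marginViolation (Θ : Matrix (Fin n) (Fin d) ℝ) (B : Finset (Fin n)) :
    Measurable fun D : Samp n m d => marginViolation (Θ *ᵥ zOf D) (AOf D) B := by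
  have hc : Measurable fun D : Samp n m d => Θ *ᵥ zOf D :=
    (continuous_const.matrix_mulVec (by unfold zOf; fun_prop)).measurable
  exact Finset.measurable_sum _ fun i _ =>
    (measurable_const.fun_sub (measurable_reducedCost_apply hc _ i)).max measurable_const

lemma measurableSet_isOptimalAmongBasic (B : Finset (Fin n)) :
    MeasurableSet
      {D : Samp n m d | B.card = m ∧ IsOptimalAmongBasic (cOf D) (AOf D) (bOf D) B} := by
  simp only [IsOptimalAmongBasic, Feasible, funext_iff, mulVec, dotProduct,
    measurableSet_setOfPred]
  fun_prop

end Measurability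

section Sample

variable [NeZero n] {D : Samp n m d} {xs : Fin n → ℝ}

lemma Nondeg.isUnit_det (hnd : Nondeg D xs) :
    IsUnit (subCols (AOf D) (enumOf (posSupport xs))).det :=
  hnd.2.2.1 _ (enumOf_injective hnd.2.2.2)

lemma Nondeg.basicSol_posSupport (hnd : Nondeg D xs) :
    basicSol (AOf D) (bOf D) (posSupport xs) = xs :=
  basicSol_eq_of_mulVec_eq hnd.2.2.2 hnd.isUnit_det hnd.1.1.1
    fun _ => eq_zero_of_notMem_posSupport hnd.1.1.2

lemma Nondeg.posSupport_eq_iff (hnd : Nondeg D xs) (B : Finset (Fin n)) :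
    posSupport xs = B ↔ B.card = m ∧ IsOptimalAmongBasic (cOf D) (AOf D) (bOf D) B := by
  have hxs := hnd.basicSol_posSupport
  have hopt : IsOptimal (cOf D) (AOf D) (bOf D) (basicSol (AOf D) (bOf D) (posSupport xs)) := by
    rw [hxs]
    exact hnd.1
  constructor
  · rintro rfl
    exact ⟨hnd.2.2.2, hopt.1, fun B' hB' => hopt.2 _ hB'⟩
  · rintro ⟨hB, hfeas, hmin⟩
    have hoptB : IsOptimal (cOf D) (AOf D) (bOf D) (basicSol (AOf D) (bOf D) B) :=
      ⟨hfeas, fun y hy => (hmin _ hopt.1).trans (hopt.2 y hy)⟩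
    have hsub : posSupport xs ⊆ B := fun i hi => by
      by_contra hiB
      rw [mem_posSupport, ← hnd.2.1 _ hoptB, basicSol_eq_zero_of_notMem hB hiB] at hi
      exact lt_irrefl 0 hi
    exact Finset.eq_of_subset_of_card_le hsub (hB.trans hnd.2.2.2.symm).le

lemma Nondeg.dotProduct_sub_le_mloss {σb : ℝ} (hnd : Nondeg D xs) (hbd : BoundedD σb D xs)
    (Θ : Matrix (Fin n) (Fin d) ℝ) {xh : Fin n → ℝ} (hxh : Feasible (AOf D) (bOf D) xh) :
    Θ *ᵥ zOf D ⬝ᵥ xs - Θ *ᵥ zOf D ⬝ᵥ xh ≤ mloss Θ D xs :=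
  dotProduct_sub_dotProduct_le_marginViolation hnd.2.2.2 hnd.isUnit_det hnd.1.1.1
    (fun _ => eq_zero_of_notMem_posSupport hnd.1.1.2) hxh
    fun i => (le_abs_self _).trans ((abs_le_l2norm xh i).trans (hbd.2.2.2.2.2 xh hxh))

lemma BoundedD.mloss_le {σb : ℝ} (hbd : BoundedD σb D xs) {Θ : Matrix (Fin n) (Fin d) ℝ}
    {θ : ℝ} (hΘ : ∀ i j, |Θ i j| ≤ θ) :
    mloss Θ D xs ≤ n * (1 + (1 + m ^ 2 * σb) * (d * θ)) := by
  have hc := abs_mulVec_apply_le hΘ fun j => (abs_le_l2norm (zOf D) j).trans hbd.2.1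
  simp only [Fintype.card_fin, mul_one] at hc
  exact marginViolation_le (abs_reducedCost_le hc hbd.2.2.1
    fun i j => (abs_apply_le_sigmaMax _ i j).trans hbd.1)

end Sample

/-- the suboptimality loss is bounded by the expected
    margin-violation loss: l_sub(Θ) ≤ E[l(D;Θ)]. -/
theorem suboptimality_le_expected_margin_loss
    [NeZero n]
    (P : Measure (Samp n m d)) [IsProbabilityMeasure P]
    (xstar : Samp n m d → Fin n → ℝ)
    (σb : ℝ)
    (h_nondeg : ∀ᵐ D ∂P, Nondeg D (xstar D))
    (h_bdd : ∀ᵐ D ∂P, BoundedD σb D (xstar D))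
    (Θ : Matrix (Fin n) (Fin d) ℝ)
    (xhat : Samp n m d → Fin n → ℝ)
    (h_xhat : ∀ᵐ D ∂P, IsOptimal (Θ.mulVec (zOf D)) (AOf D) (bOf D) (xhat D)) :
    (∫ D, ((Θ.mulVec (zOf D)) ⬝ᵥ xstar D - (Θ.mulVec (zOf D)) ⬝ᵥ xhat D) ∂P) ≤
      ∫ D, mloss Θ D (xstar D) ∂P := by
  have h_gap : ∀ᵐ D ∂P, 0 ≤ Θ *ᵥ zOf D ⬝ᵥ xstar D - Θ *ᵥ zOf D ⬝ᵥ xhat D ∧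
      Θ *ᵥ zOf D ⬝ᵥ xstar D - Θ *ᵥ zOf D ⬝ᵥ xhat D ≤ mloss Θ D (xstar D) := by
    filter_upwards [h_nondeg, h_bdd, h_xhat] with D hnd hbd hxh
    exact ⟨sub_nonneg.2 (hxh.2 _ hnd.1.1), hnd.dotProduct_sub_le_mloss hbd Θ hxh.1⟩
  have h_meas : AEMeasurable (fun D => mloss Θ D (xstar D)) P :=
    aemeasurable_apply_of_ae_mem_iff (F := fun B D => marginViolation (Θ *ᵥ zOf D) (AOf D) B)
      (k := fun D => posSupport (xstar D)) (measurable_marginViolation Θ)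
      measurableSet_isOptimalAmongBasic
      (h_nondeg.mono fun D hnd B => (hnd.posSupport_eq_iff B).symm)
  obtain ⟨θ, hθ⟩ := Finite.exists_le fun p : Fin n × Fin d => |Θ p.1 p.2|
  have h_int : Integrable (fun D => mloss Θ D (xstar D)) P :=
    .of_bound h_meas.aestronglyMeasurable _ <| h_bdd.mono fun D hbd =>
      (Real.norm_of_nonneg marginViolation_nonneg).trans_le (hbd.mloss_le fun i j => hθ (i, j))
  exact integral_mono_of_nonneg (h_gap.mono fun _ h => h.1) h_int (h_gap.mono fun _ h => h.2)

end MOMPaper
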